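/- arXiv:2305.16102 — 6 statements merged into one kernel-verified Lean document; each statement's English description precedes it below -/
import Mathlib

section
/- Consider the attention-based GNN dynamics with arbitrary row-stochastic aggregation operators: X^(t+1) := σ(P^(t)X^(t)W^(t)) with X^(0) ∈ ℝ^{N×d}, where each P^(t) ∈ ℝ^{N×N} is row-stochastic (entrywise nonnegative with every row summing to 1), W^(t) ∈ ℝ^{d×d}, and σ: ℝ → ℝ is applied entrywise. Under assumptions (A3) and (A4), there exists C > 0 such that ‖X^(t)‖_max ≤ C for all t ≥ 0, where ‖M‖_max := max_{i,j}|M_{ij}|. -/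
open Matrix Filter

noncomputable section

/-- Frobenius norm of a real matrix. -/
def frobNorm {N d : ℕ} (X : Matrix (Fin N) (Fin d) ℝ) : ℝ :=
  Real.sqrt (∑ i, ∑ j, (X i j) ^ 2)

/-- μ(X) = ‖X − 1γ_X‖_F where γ_X = (1/N)1ᵀX. -/
def gnnMu {N d : ℕ} (X : Matrix (Fin N) (Fin d) ℝ) : ℝ :=
  frobNorm (X - Matrix.of fun _i j => (∑ k, X k j) / N)

/-- Row-stochastic matrix. -/
def rowStochastic {N : ℕ} (P : Matrix (Fin N) (Fin N) ℝ) : Prop :=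
  (∀ i j, 0 ≤ P i j) ∧ ∀ i, ∑ j, P i j = 1

/-- The set 𝒫_{G,ε}. -/
def Pset {N : ℕ} (G : SimpleGraph (Fin N)) (ε : ℝ) : Set (Matrix (Fin N) (Fin N) ℝ) :=
  {P | rowStochastic P ∧ (∀ i j, G.Adj i j → ε ≤ P i j ∧ P i j ≤ 1) ∧
    ∀ i j, ¬ G.Adj i j → P i j = 0}

/-- The set 𝒟 of diagonal matrices with diagonal entries in [0,1]. -/
def Dset (N : ℕ) : Set (Matrix (Fin N) (Fin N) ℝ) :=
  {D | D.IsDiag ∧ ∀ i, 0 ≤ D i i ∧ D i i ≤ 1}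

/-- The set 𝒟_δ of diagonal matrices with diagonal entries in [0,δ]. -/
def DsetB (N : ℕ) (δ : ℝ) : Set (Matrix (Fin N) (Fin N) ℝ) :=
  {D | D.IsDiag ∧ ∀ i, 0 ≤ D i i ∧ D i i ≤ δ}

/-- The set ℳ_{G,ε} = {DP : D ∈ 𝒟, P ∈ 𝒫_{G,ε}}. -/
def Mset {N : ℕ} (G : SimpleGraph (Fin N)) (ε : ℝ) : Set (Matrix (Fin N) (Fin N) ℝ) :=
  {M | ∃ D ∈ Dset N, ∃ P ∈ Pset G ε, M = D * P}

/-- The set ℳ_{G,ε,δ} = {DP : D ∈ 𝒟_δ, P ∈ 𝒫_{G,ε}}. -/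
def MsetB {N : ℕ} (G : SimpleGraph (Fin N)) (ε δ : ℝ) : Set (Matrix (Fin N) (Fin N) ℝ) :=
  {M | ∃ D ∈ DsetB N δ, ∃ P ∈ Pset G ε, M = D * P}

/-- Backward product P^(t) P^(t-1) ⋯ P^(0). -/
def bprod {N : ℕ} (P : ℕ → Matrix (Fin N) (Fin N) ℝ) : ℕ → Matrix (Fin N) (Fin N) ℝ
  | 0 => P 0
  | t + 1 => P (t + 1) * bprod P t

/-- The orthogonal projection J = I − (1/N)11ᵀ onto the complement of span{1}. -/
def projJ (N : ℕ) : Matrix (Fin N) (Fin N) ℝ :=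
  1 - (N : ℝ)⁻¹ • Matrix.of fun _ _ => (1 : ℝ)

/-- Matrix ∞-norm: maximum absolute row sum. -/
def infNorm {N : ℕ} (M : Matrix (Fin N) (Fin N) ℝ) : ℝ :=
  ⨆ i, ∑ j, |M i j|

/-- Forward product of entrywise absolute values |W^(0)||W^(1)|⋯|W^(k)|. -/
def Wabs {d : ℕ} (W : ℕ → Matrix (Fin d) (Fin d) ℝ) : ℕ → Matrix (Fin d) (Fin d) ℝ
  | 0 => (W 0).map (fun x => |x|)
  | k + 1 => Wabs W k * (W (k + 1)).map (fun x => |x|)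

/-- Q̂_{t₀, t₀+k} = P^{t₀+k} D^{t₀+k-1} P^{t₀+k-1} ⋯ D^{t₀} P^{t₀}. -/
def Qhat {N : ℕ} (D P : ℕ → Matrix (Fin N) (Fin N) ℝ) (t₀ : ℕ) :
    ℕ → Matrix (Fin N) (Fin N) ℝ
  | 0 => P t₀
  | k + 1 => P (t₀ + k + 1) * D (t₀ + k) * Qhat D P t₀ k

/-- Q_{0,k} = D^(k) P^(k) ⋯ D^(0) P^(0). -/
def Qprod {N : ℕ} (D P : ℕ → Matrix (Fin N) (Fin N) ℝ) : ℕ → Matrix (Fin N) (Fin N) ℝ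
  | 0 => D 0 * P 0
  | k + 1 => D (k + 1) * P (k + 1) * Qprod D P k

/-- P^(m+k) P^(m+k-1) ⋯ P^(m). -/
def PprodFrom {N : ℕ} (P : ℕ → Matrix (Fin N) (Fin N) ℝ) (m : ℕ) :
    ℕ → Matrix (Fin N) (Fin N) ℝ
  | 0 => P m
  | k + 1 => P (m + k + 1) * PprodFrom P m k

/-- D^(m+k) P^(m+k) ⋯ D^(m) P^(m). -/
def QprodFrom {N : ℕ} (D P : ℕ → Matrix (Fin N) (Fin N) ℝ) (m : ℕ) :
    ℕ → Matrix (Fin N) (Fin N) ℝ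
  | 0 => D m * P m
  | k + 1 => D (m + k + 1) * P (m + k + 1) * QprodFrom D P m k

/-- Joint spectral radius of a set of square matrices (w.r.t. the Frobenius norm;
the value is independent of the chosen norm). -/
def JSR {n : ℕ} (A : Set (Matrix (Fin n) (Fin n) ℝ)) : ℝ :=
  Filter.limsup (fun k : ℕ =>
    sSup {x : ℝ | ∃ M : Fin k → Matrix (Fin n) (Fin n) ℝ,
      (∀ i, M i ∈ A) ∧ x = frobNorm (List.ofFn M).prod ^ (k : ℝ)⁻¹}) Filter.atTop

/-- Spectral radius of a real square matrix: max modulus of its complex eigenvalues. -/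
def specRad {n : ℕ} (M : Matrix (Fin n) (Fin n) ℝ) : ℝ :=
  sSup {r : ℝ | ∃ z ∈ spectrum ℂ (M.map Complex.ofReal), r = ‖z‖}

end
/-!
Since `|σ x| ≤ |x|` and a row-stochastic matrix averages the rows it multiplies, a bound `v` on
the columns of `X t` (uniform over the rows) propagates to the bound `v ᵥ* |W t|` on the columns
of `X (t + 1)`. Starting from the constant bound `a` on `X 0`, this gives
`|X (t + 1) i j| ≤ (a ᵥ* |W 0| ⋯ |W t|) j ≤ d a C` by (A3).
-/

lemma abs_le_abs_of_div_mem_Icc {σ : ℝ → ℝ} (h0 : σ 0 = 0)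
    (hσ : ∀ x, x ≠ 0 → 0 ≤ σ x / x ∧ σ x / x ≤ 1) (x : ℝ) : |σ x| ≤ |x| := by
  rcases eq_or_ne x 0 with rfl | hx
  · simp [h0]
  have hratio : |σ x / x| ≤ 1 := abs_le.mpr ⟨by linarith [(hσ x hx).1], (hσ x hx).2⟩
  calc |σ x| = |σ x / x| * |x| := by rw [← abs_mul, div_mul_cancel₀ _ hx]
    _ ≤ |x| := mul_le_of_le_one_left (abs_nonneg x) hratio

lemma Matrix.exists_nonneg_forall_abs_apply_le {m n : Type*} [Finite m] [Finite n]
    (A : Matrix m n ℝ) : ∃ a, 0 ≤ a ∧ ∀ i j, |A i j| ≤ a := by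
  obtain ⟨a, ha⟩ := Finite.exists_le fun p : m × n => |A p.1 p.2|
  exact ⟨max a 0, le_max_right _ _, fun i j => (ha (i, j)).trans (le_max_left _ _)⟩

lemma rowStochastic.abs_mul_apply_le {N : ℕ} {n : Type*} {P : Matrix (Fin N) (Fin N) ℝ}
    (hP : rowStochastic P) {Y : Matrix (Fin N) n ℝ} {b : ℝ} {m : n}
    (hY : ∀ l, |Y l m| ≤ b) (i : Fin N) : |(P * Y) i m| ≤ b :=
  calc |(P * Y) i m| ≤ ∑ l, P i l * |Y l m| := by
        simpa only [Matrix.mul_apply, abs_mul, abs_of_nonneg (hP.1 i _)]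
          using Finset.abs_sum_le_sum_abs (fun l => P i l * Y l m) Finset.univ
    _ ≤ ∑ l, P i l * b := by gcongr with l; exacts [hP.1 i l, hY l]
    _ = b := by rw [← Finset.sum_mul, hP.2 i, one_mul]

lemma Matrix.abs_mul_apply_le_vecMul {m n o : Type*} [Fintype n] {Y : Matrix m n ℝ}
    {v : n → ℝ} (hY : ∀ i k, |Y i k| ≤ v k) (W : Matrix n o ℝ) (i : m) (j : o) :
    |(Y * W) i j| ≤ (v ᵥ* W.map abs) j :=
  calc |(Y * W) i j| ≤ ∑ k, |Y i k| * |W k j| := by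
        simpa only [Matrix.mul_apply, abs_mul]
          using Finset.abs_sum_le_sum_abs (fun k => Y i k * W k j) Finset.univ
    _ ≤ ∑ k, v k * |W k j| := by gcongr with k; exact hY i k
    _ = (v ᵥ* W.map abs) j := rfl

lemma abs_map_mul_mul_apply_le {N : ℕ} {n o : Type*} [Fintype n] {σ : ℝ → ℝ}
    (hσ : ∀ x, |σ x| ≤ |x|) {P : Matrix (Fin N) (Fin N) ℝ} (hP : rowStochastic P)
    {Y : Matrix (Fin N) n ℝ} {v : n → ℝ} (hY : ∀ l k, |Y l k| ≤ v k) (W : Matrix n o ℝ)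
    (i : Fin N) (j : o) : |((P * Y * W).map σ) i j| ≤ (v ᵥ* W.map abs) j :=
  (hσ _).trans <| Matrix.abs_mul_apply_le_vecMul (fun l k => hP.abs_mul_apply_le (hY · k) l) W i j

lemma vecMul_Wabs_succ {d : ℕ} (v : Fin d → ℝ) (W : ℕ → Matrix (Fin d) (Fin d) ℝ) (k : ℕ) :
    v ᵥ* Wabs W (k + 1) = (v ᵥ* Wabs W k) ᵥ* (W (k + 1)).map abs :=
  (Matrix.vecMul_vecMul _ _ _).symm

lemma abs_trajectory_le_vecMul_Wabs {N d : ℕ} {P : ℕ → Matrix (Fin N) (Fin N) ℝ}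
    (hP : ∀ t, rowStochastic (P t)) {W : ℕ → Matrix (Fin d) (Fin d) ℝ} {σ : ℝ → ℝ}
    (hσ : ∀ x, |σ x| ≤ |x|) {X : ℕ → Matrix (Fin N) (Fin d) ℝ}
    (hdyn : ∀ t, X (t + 1) = (P t * X t * W t).map σ) {a : ℝ} (ha : ∀ i j, |X 0 i j| ≤ a)
    (t : ℕ) (i : Fin N) (j : Fin d) : |X (t + 1) i j| ≤ ((fun _ => a) ᵥ* Wabs W t) j := by
  induction t generalizing i j with
  | zero => exact hdyn 0 ▸ abs_map_mul_mul_apply_le hσ (hP 0) ha (W 0) i j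
  | succ t ih =>
    rw [hdyn, vecMul_Wabs_succ]
    exact abs_map_mul_mul_apply_le hσ (hP _) ih (W _) i j

lemma const_vecMul_apply_le {d : ℕ} {M : Matrix (Fin d) (Fin d) ℝ} {C a : ℝ}
    (hM : ∀ i j, |M i j| ≤ C) (ha : 0 ≤ a) (j : Fin d) :
    ((fun _ => a) ᵥ* M) j ≤ d * a * C :=
  calc ((fun _ => a) ᵥ* M) j = ∑ k, a * M k j := rfl
    _ ≤ ∑ _k : Fin d, a * C := by gcongr with k; exact (le_abs_self _).trans (hM k j)
    _ = d * a * C := by simp [mul_assoc]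

theorem stmt_2_general (N d : ℕ)
    (P : ℕ → Matrix (Fin N) (Fin N) ℝ) (hP : ∀ t, rowStochastic (P t))
    (W : ℕ → Matrix (Fin d) (Fin d) ℝ) (σ : ℝ → ℝ)
    (X : ℕ → Matrix (Fin N) (Fin d) ℝ)
    (hdyn : ∀ t, X (t + 1) = (P t * X t * W t).map σ)
    (hA3 : ∃ C : ℝ, ∀ k i j, |Wabs W k i j| ≤ C)
    (hA4 : σ 0 = 0 ∧ ∀ x : ℝ, x ≠ 0 → 0 ≤ σ x / x ∧ σ x / x ≤ 1) :
    ∃ C > 0, ∀ t i j, |X t i j| ≤ C := by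
  obtain ⟨C, hC⟩ := hA3
  obtain ⟨a, ha0, ha⟩ := (X 0).exists_nonneg_forall_abs_apply_le
  have hσ := abs_le_abs_of_div_mem_Icc hA4.1 hA4.2
  refine ⟨max a (d * a * C) + 1, by positivity, fun t i j => ?_⟩
  suffices |X t i j| ≤ max a (d * a * C) by linarith
  cases t with
  | zero => exact (ha i j).trans (le_max_left _ _)
  | succ t =>
    calc |X (t + 1) i j| ≤ ((fun _ => a) ᵥ* Wabs W t) j :=
          abs_trajectory_le_vecMul_Wabs hP hσ hdyn ha t i j
      _ ≤ d * a * C := const_vecMul_apply_le (hC t) ha0 j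
      _ ≤ _ := le_max_right _ _

/-- under (A3) and (A4), trajectories are uniformly bounded in max-norm. -/
theorem stmt_2 (N d : ℕ) (hN : 1 ≤ N) (hd : 1 ≤ d)
    (P : ℕ → Matrix (Fin N) (Fin N) ℝ) (hP : ∀ t, rowStochastic (P t))
    (W : ℕ → Matrix (Fin d) (Fin d) ℝ) (σ : ℝ → ℝ)
    (X : ℕ → Matrix (Fin N) (Fin d) ℝ)
    (hdyn : ∀ t, X (t + 1) = (P t * X t * W t).map σ)
    (hA3 : ∃ C : ℝ, ∀ k i j, |Wabs W k i j| ≤ C)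
    (hA4 : σ 0 = 0 ∧ ∀ x : ℝ, x ≠ 0 → 0 ≤ σ x / x ∧ σ x / x ≤ 1) :
    ∃ C > 0, ∀ t i j, |X t i j| ≤ C :=
  stmt_2_general N d P hP W σ X hdyn hA3 hA4
end

section
/- Let G be connected and non-bipartite and let ε > 0. Then there exist T ∈ ℕ and c > 0 such that for any matrices P^(0), P^(1), …, P^(T) ∈ 𝒫_{G,ε}, every entry of the product P^(T)P^(T−1)⋯P^(0) lies in the interval [c, 1]. -/
open Matrix Filter

/-!
An odd closed walk at a vertex `r`, together with the back-and-forth walks along an edge at `r`,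
gives closed walks at `r` of every length at least its own. Routing through `r` then joins every
pair of vertices by a walk of one common length `M`, so each entry of a product of `M` matrices
from `𝒫_{G,ε}` dominates the weight `ε ^ M` of a single walk. The upper bound `1` holds because the
product is row-stochastic.
-/

namespace SimpleGraph

variable {V : Type*} {G : SimpleGraph V}

lemma exists_loop_length_eq_two_mul {r x : V} (h : G.Adj r x) (k : ℕ) :
    ∃ w : G.Walk r r, w.length = 2 * k := by
  induction k with
  | zero => exact ⟨Walk.nil, rfl⟩
  | succ k ih =>
    obtain ⟨w, hw⟩ := ih
    exact ⟨w.append (Walk.cons h (Walk.cons h.symm Walk.nil)), by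
      simp only [Walk.length_append, Walk.length_cons, Walk.length_nil, hw]; ring⟩

lemma Walk.exists_loop_length_eq_of_odd {r : V} (c : G.Walk r r) (hc : Odd c.length) {n : ℕ}
    (hn : c.length ≤ n) : ∃ w : G.Walk r r, w.length = n := by
  obtain ⟨x, hx⟩ : ∃ x, G.Adj r x := by
    cases c with
    | nil => simp at hc
    | cons h _ => exact ⟨_, h⟩
  rcases Nat.even_or_odd n with ⟨k, rfl⟩ | hn_odd
  · simpa [two_mul] using exists_loop_length_eq_two_mul hx k
  · obtain ⟨k, hk⟩ := Nat.Odd.sub_odd hn_odd hc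
    obtain ⟨w, hw⟩ := exists_loop_length_eq_two_mul hx k
    exact ⟨c.append w, by rw [Walk.length_append, hw]; omega⟩

lemma Connected.exists_walk_length_eq_of_not_colorable_two [Finite V] (hconn : G.Connected)
    (hnb : ¬ G.Colorable 2) : ∃ M, 0 < M ∧ ∀ u v : V, ∃ w : G.Walk u v, w.length = M := by
  obtain ⟨r, c, hc⟩ : ∃ r, ∃ c : G.Walk r r, Odd c.length := by
    simpa [two_colorable_iff_forall_loop_even] using hnb
  have : Nonempty V := hconn.nonempty
  have hdiam : G.ediam ≠ ⊤ := connected_iff_ediam_ne_top.mp hconn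
  refine ⟨2 * G.diam + c.length, by have := hc.pos; omega, fun u v => ?_⟩
  obtain ⟨p, hp⟩ := hconn.exists_walk_length_eq_dist u r
  obtain ⟨q, hq⟩ := hconn.exists_walk_length_eq_dist r v
  have hpd : p.length ≤ G.diam := hp ▸ dist_le_diam hdiam
  have hqd : q.length ≤ G.diam := hq ▸ dist_le_diam hdiam
  obtain ⟨w, hw⟩ := c.exists_loop_length_eq_of_odd hc
    (n := 2 * G.diam + c.length - p.length - q.length) (by omega)
  exact ⟨p.append (w.append q), by simp only [Walk.length_append, hw]; omega⟩

end SimpleGraph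

section BackwardProduct

variable {N : ℕ} {P : ℕ → Matrix (Fin N) (Fin N) ℝ} {t : ℕ}

lemma rowStochastic_iff_mem {A : Matrix (Fin N) (Fin N) ℝ} :
    rowStochastic A ↔ A ∈ Matrix.rowStochastic ℝ (Fin N) :=
  Matrix.mem_rowStochastic_iff_sum.symm

lemma bprod_mem_rowStochastic (hP : ∀ s ≤ t, P s ∈ Matrix.rowStochastic ℝ (Fin N)) :
    bprod P t ∈ Matrix.rowStochastic ℝ (Fin N) := by
  induction t with
  | zero => exact hP 0 le_rfl
  | succ t ih =>
    exact Submonoid.mul_mem _ (hP (t + 1) le_rfl) (ih fun s hs => hP s (by omega))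

lemma pow_le_bprod_of_walk {G : SimpleGraph (Fin N)} {ε : ℝ} (hε : 0 ≤ ε)
    (hP : ∀ s ≤ t, P s ∈ Matrix.rowStochastic ℝ (Fin N))
    (hadj : ∀ s ≤ t, ∀ i j, G.Adj i j → ε ≤ P s i j) {i j : Fin N} (w : G.Walk i j)
    (hw : w.length = t + 1) : ε ^ (t + 1) ≤ bprod P t i j := by
  induction t generalizing i with
  | zero =>
    simpa [bprod] using hadj 0 le_rfl i j (SimpleGraph.Walk.adj_of_length_eq_one hw)
  | succ t ih =>
    cases w with
    | nil => simp at hw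
    | @cons _ k _ hik p =>
      have hP' : ∀ s ≤ t, P s ∈ Matrix.rowStochastic ℝ (Fin N) := fun s hs => hP s (by omega)
      have hp : ε ^ (t + 1) ≤ bprod P t k j :=
        ih hP' (fun s hs => hadj s (by omega)) p (by simpa using hw)
      have hPt := hP (t + 1) le_rfl
      have hB := bprod_mem_rowStochastic hP'
      calc ε ^ (t + 1 + 1) = ε * ε ^ (t + 1) := pow_succ' ε (t + 1)
        _ ≤ P (t + 1) i k * bprod P t k j :=
          mul_le_mul (hadj _ le_rfl i k hik) hp (by positivity)
            (Matrix.nonneg_of_mem_rowStochastic hPt)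
        _ ≤ ∑ m, P (t + 1) i m * bprod P t m j :=
          Finset.single_le_sum (f := fun m => P (t + 1) i m * bprod P t m j)
            (fun m _ => mul_nonneg (Matrix.nonneg_of_mem_rowStochastic hPt)
              (Matrix.nonneg_of_mem_rowStochastic hB)) (Finset.mem_univ k)
        _ = bprod P (t + 1) i j := (Matrix.mul_apply).symm

end BackwardProduct

theorem stmt_4_general (N : ℕ) (G : SimpleGraph (Fin N))
    (hconn : G.Connected) (hnb : ¬ G.Colorable 2) (ε : ℝ) (hε : 0 < ε) :
    ∃ T : ℕ, ∃ c > 0, ∀ P : ℕ → Matrix (Fin N) (Fin N) ℝ,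
      (∀ t, t ≤ T → P t ∈ Pset G ε) →
      ∀ i j, c ≤ bprod P T i j ∧ bprod P T i j ≤ 1 := by
  obtain ⟨M, hM, hwalk⟩ := hconn.exists_walk_length_eq_of_not_colorable_two hnb
  obtain ⟨T, rfl⟩ := Nat.exists_eq_add_one_of_ne_zero hM.ne'
  refine ⟨T, ε ^ (T + 1), by positivity, fun P hP i j => ?_⟩
  have hstoch : ∀ s ≤ T, P s ∈ Matrix.rowStochastic ℝ (Fin N) :=
    fun s hs => rowStochastic_iff_mem.mp (hP s hs).1
  obtain ⟨w, hw⟩ := hwalk i j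
  exact ⟨pow_le_bprod_of_walk hε.le hstoch (fun s hs i j h => ((hP s hs).2.1 i j h).1) w hw,
    Matrix.le_one_of_mem_rowStochastic (bprod_mem_rowStochastic hstoch)⟩

/-- there exist T and c > 0 such that any product of T+1 matrices from
𝒫_{G,ε} has all entries in [c,1]. -/
theorem stmt_4 (N : ℕ) (hN : 2 ≤ N) (G : SimpleGraph (Fin N))
    (hconn : G.Connected) (hnb : ¬ G.Colorable 2) (ε : ℝ) (hε : 0 < ε) :
    ∃ T : ℕ, ∃ c > 0, ∀ P : ℕ → Matrix (Fin N) (Fin N) ℝ,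
      (∀ t, t ≤ T → P t ∈ Pset G ε) →
      ∀ i j, c ≤ bprod P T i j ∧ bprod P T i j ≤ 1 :=
  stmt_4_general N G hconn hnb ε hε
end

section
/- Let G be connected and non-bipartite and let ε > 0. Then every sequence {P^(t)}_{t≥0} with P^(t) ∈ 𝒫_{G,ε} for all t ≥ 0 is ergodic; that is, lim_{t→∞} J·P^(t)P^(t−1)⋯P^(0) = 0. -/
open Matrix Filter

/-! ### Auxiliary lemmas for stmt_5 -/

section StmtFiveAux

open Finset

variable {N : ℕ}

/-- Oscillation (max minus min) of a vector. -/
noncomputable def osc [NeZero N] (x : Fin N → ℝ) : ℝ :=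
  Finset.univ.sup' Finset.univ_nonempty x - Finset.univ.inf' Finset.univ_nonempty x

lemma abs_sub_avg_le_osc [NeZero N] (x : Fin N → ℝ) (i : Fin N) :
    |x i - (N : ℝ)⁻¹ * ∑ k, x k| ≤ osc x := by
  have hN : (0:ℝ) < N := by
    exact_mod_cast Nat.pos_of_ne_zero (NeZero.ne N)
  set M := Finset.univ.sup' Finset.univ_nonempty x with hM
  set mm := Finset.univ.inf' Finset.univ_nonempty x with hmm
  have hxM : ∀ k, x k ≤ M := fun k => Finset.le_sup' x (Finset.mem_univ k)
  have hxm : ∀ k, mm ≤ x k := fun k => Finset.inf'_le x (Finset.mem_univ k)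
  have h1 : ∑ k, x k ≤ (N:ℝ) * M := by
    calc ∑ k, x k ≤ ∑ _k : Fin N, M := Finset.sum_le_sum fun k _ => hxM k
      _ = (N:ℝ) * M := by
          rw [Finset.sum_const, Finset.card_univ, Fintype.card_fin, nsmul_eq_mul]
  have h2 : (N:ℝ) * mm ≤ ∑ k, x k := by
    calc (N:ℝ) * mm = ∑ _k : Fin N, mm := by
          rw [Finset.sum_const, Finset.card_univ, Fintype.card_fin, nsmul_eq_mul]
      _ ≤ ∑ k, x k := Finset.sum_le_sum fun k _ => hxm k
  have e1 : (N:ℝ)⁻¹ * ∑ k, x k ≤ M := by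
    have := mul_le_mul_of_nonneg_left h1 (inv_nonneg.2 hN.le)
    rwa [← mul_assoc, inv_mul_cancel₀ hN.ne', one_mul] at this
  have e2 : mm ≤ (N:ℝ)⁻¹ * ∑ k, x k := by
    have := mul_le_mul_of_nonneg_left h2 (inv_nonneg.2 hN.le)
    rwa [← mul_assoc, inv_mul_cancel₀ hN.ne', one_mul] at this
  have hosc : osc x = M - mm := rfl
  rw [hosc, abs_le]
  constructor
  · have := hxm i; linarith
  · have := hxM i; linarith

lemma osc_mulVec_le [NeZero N] {Q : Matrix (Fin N) (Fin N) ℝ} {δ : ℝ} (hδ : 0 ≤ δ)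
    (hlow : ∀ i j, δ ≤ Q i j) (hrow : ∀ i, ∑ j, Q i j = 1) (x : Fin N → ℝ) :
    osc (Q *ᵥ x) ≤ (1 - (N : ℝ) * δ) * osc x := by
  have hne : (Finset.univ : Finset (Fin N)).Nonempty := Finset.univ_nonempty
  set M := Finset.univ.sup' Finset.univ_nonempty x with hM
  set mm := Finset.univ.inf' Finset.univ_nonempty x with hmm
  have hxM : ∀ k, x k ≤ M := fun k => Finset.le_sup' x (Finset.mem_univ k)
  have hxm : ∀ k, mm ≤ x k := fun k => Finset.inf'_le x (Finset.mem_univ k)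
  have hsum : ∀ i, ∑ l, (Q i l - δ) = 1 - (N:ℝ) * δ := by
    intro i
    rw [Finset.sum_sub_distrib, hrow i, Finset.sum_const, Finset.card_univ,
      Fintype.card_fin, nsmul_eq_mul]
  have hup : ∀ i, (Q *ᵥ x) i ≤ δ * (∑ l, x l) + (1 - (N:ℝ) * δ) * M := by
    intro i
    have h1 : (Q *ᵥ x) i = ∑ l, (δ * x l + (Q i l - δ) * x l) := by
      simp only [Matrix.mulVec, dotProduct]
      exact Finset.sum_congr rfl fun l _ => by ring
    have h2 : ∑ l, (Q i l - δ) * x l ≤ ∑ l, (Q i l - δ) * M :=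
      Finset.sum_le_sum fun l _ => mul_le_mul_of_nonneg_left (hxM l) (sub_nonneg.2 (hlow i l))
    have h3 : ∑ l, (Q i l - δ) * M = (1 - (N:ℝ) * δ) * M := by
      rw [← Finset.sum_mul, hsum i]
    rw [h1, Finset.sum_add_distrib, ← Finset.mul_sum]
    linarith
  have hlo : ∀ i, δ * (∑ l, x l) + (1 - (N:ℝ) * δ) * mm ≤ (Q *ᵥ x) i := by
    intro i
    have h1 : (Q *ᵥ x) i = ∑ l, (δ * x l + (Q i l - δ) * x l) := by
      simp only [Matrix.mulVec, dotProduct]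
      exact Finset.sum_congr rfl fun l _ => by ring
    have h2 : ∑ l, (Q i l - δ) * mm ≤ ∑ l, (Q i l - δ) * x l :=
      Finset.sum_le_sum fun l _ => mul_le_mul_of_nonneg_left (hxm l) (sub_nonneg.2 (hlow i l))
    have h3 : ∑ l, (Q i l - δ) * mm = (1 - (N:ℝ) * δ) * mm := by
      rw [← Finset.sum_mul, hsum i]
    rw [h1, Finset.sum_add_distrib, ← Finset.mul_sum]
    linarith
  have hsup : Finset.univ.sup' Finset.univ_nonempty (Q *ᵥ x)
      ≤ δ * (∑ l, x l) + (1 - (N:ℝ) * δ) * M :=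
    Finset.sup'_le _ _ fun i _ => hup i
  have hinf : δ * (∑ l, x l) + (1 - (N:ℝ) * δ) * mm
      ≤ Finset.univ.inf' Finset.univ_nonempty (Q *ᵥ x) :=
    Finset.le_inf' _ _ fun i _ => hlo i
  have hoscx : osc x = M - mm := rfl
  have hoscQ : osc (Q *ᵥ x) = Finset.univ.sup' Finset.univ_nonempty (Q *ᵥ x)
      - Finset.univ.inf' Finset.univ_nonempty (Q *ᵥ x) := rfl
  rw [hoscx, hoscQ, mul_sub]
  linarith

variable {G : SimpleGraph (Fin N)}

lemma exists_neighbor (hN : 2 ≤ N) (hconn : G.Connected) (i : Fin N) : ∃ u, G.Adj i u := by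
  haveI : Nontrivial (Fin N) := Fin.nontrivial_iff_two_le.mpr hN
  obtain ⟨j, hj⟩ := exists_ne i
  obtain ⟨w⟩ := hconn.preconnected i j
  cases w with
  | nil => exact absurd rfl hj
  | cons h p => exact ⟨_, h⟩

lemma pad_walk {i j : Fin N} (h : ∃ u, G.Adj i u) (w : G.Walk i j) (k : ℕ) :
    ∃ w' : G.Walk i j, w'.length = w.length + 2 * k := by
  obtain ⟨u, hu⟩ := h
  induction k with
  | zero => exact ⟨w, by omega⟩
  | succ k ih =>
    obtain ⟨w', hw'⟩ := ih
    refine ⟨SimpleGraph.Walk.cons hu (SimpleGraph.Walk.cons hu.symm w'), ?_⟩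
    simp only [SimpleGraph.Walk.length_cons]
    omega

lemma exists_odd_closed_walk (hconn : G.Connected) (hnb : ¬ G.Colorable 2) (v0 : Fin N) :
    ∃ w : G.Walk v0 v0, Odd w.length := by
  have key : ∃ u v, G.Adj u v ∧ G.dist v0 u % 2 = G.dist v0 v % 2 := by
    by_contra hcon
    push_neg at hcon
    exact hnb ⟨SimpleGraph.Coloring.mk
      (fun v => (⟨G.dist v0 v % 2, Nat.mod_lt _ (by norm_num)⟩ : Fin 2))
      (fun {u v} h => by simpa [Fin.ext_iff] using hcon u v h)⟩
  obtain ⟨u, v, huv, hpar⟩ := key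
  obtain ⟨p, hp⟩ := (hconn.preconnected v0 u).exists_walk_length_eq_dist
  obtain ⟨q, hq⟩ := (hconn.preconnected v0 v).exists_walk_length_eq_dist
  refine ⟨p.append (SimpleGraph.Walk.cons huv q.reverse), ?_⟩
  have hlen : (p.append (SimpleGraph.Walk.cons huv q.reverse)).length
      = G.dist v0 u + (G.dist v0 v + 1) := by
    simp [SimpleGraph.Walk.length_append, SimpleGraph.Walk.length_cons,
      SimpleGraph.Walk.length_reverse, hp, hq]
  rw [hlen, Nat.odd_iff]
  omega

lemma exists_uniform_walk (hN : 2 ≤ N) (hconn : G.Connected) (hnb : ¬ G.Colorable 2) :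
    ∃ m, 1 ≤ m ∧ ∀ i j : Fin N, ∃ w : G.Walk i j, w.length = m := by
  have v0 : Fin N := ⟨0, by omega⟩
  obtain ⟨c, hc⟩ := exists_odd_closed_walk hconn hnb v0
  obtain ⟨tt, htt⟩ := hc
  set L := c.length with hL
  set S := Finset.univ.sup (fun i : Fin N => G.dist v0 i) with hS
  refine ⟨L + 2 * S, by omega, ?_⟩
  intro i j
  obtain ⟨p, hp⟩ := (hconn.preconnected v0 i).exists_walk_length_eq_dist
  obtain ⟨q, hq⟩ := (hconn.preconnected v0 j).exists_walk_length_eq_dist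
  have hdi : G.dist v0 i ≤ S := Finset.le_sup (Finset.mem_univ i)
  have hdj : G.dist v0 j ≤ S := Finset.le_sup (Finset.mem_univ j)
  have hadj := exists_neighbor hN hconn i
  have hw1len : (p.reverse.append q).length = G.dist v0 i + G.dist v0 j := by
    simp [SimpleGraph.Walk.length_append, SimpleGraph.Walk.length_reverse, hp, hq]
  rcases Nat.even_or_odd (L + 2 * S - (p.reverse.append q).length) with he | ho
  · obtain ⟨r, hr⟩ := he
    obtain ⟨w', hw'⟩ := pad_walk hadj (p.reverse.append q) r
    exact ⟨w', by omega⟩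
  · obtain ⟨s, hs⟩ := ho
    have hw2len : (p.reverse.append (c.append q)).length
        = G.dist v0 i + (L + G.dist v0 j) := by
      simp [SimpleGraph.Walk.length_append, SimpleGraph.Walk.length_reverse, hp, hq, ← hL]
    obtain ⟨w', hw'⟩ := pad_walk hadj (p.reverse.append (c.append q)) (s - tt)
    exact ⟨w', by omega⟩

variable {ε : ℝ} {P : ℕ → Matrix (Fin N) (Fin N) ℝ}

lemma pprod_nonneg (hnn : ∀ t i j, 0 ≤ P t i j) :
    ∀ k s i j, 0 ≤ PprodFrom P s k i j := by
  intro k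
  induction k with
  | zero => intro s i j; exact hnn s i j
  | succ k ih =>
    intro s i j
    rw [PprodFrom, Matrix.mul_apply]
    exact Finset.sum_nonneg fun l _ => mul_nonneg (hnn _ _ _) (ih s l j)

lemma pprod_rowsum (hrow : ∀ t i, ∑ j, P t i j = 1) :
    ∀ k s i, ∑ j, PprodFrom P s k i j = 1 := by
  intro k
  induction k with
  | zero => intro s i; exact hrow s i
  | succ k ih =>
    intro s i
    simp only [PprodFrom, Matrix.mul_apply]
    rw [Finset.sum_comm]
    have h : ∀ l, ∑ jj, P (s + k + 1) i l * PprodFrom P s k l jj = P (s + k + 1) i l := by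
      intro l
      rw [← Finset.mul_sum, ih s l, mul_one]
    rw [Finset.sum_congr rfl fun l _ => h l]
    exact hrow _ i

lemma pprod_entry_ge (hε : 0 < ε) (hedge : ∀ t i j, G.Adj i j → ε ≤ P t i j)
    (hnn : ∀ t i j, 0 ≤ P t i j) :
    ∀ k s i j, (∃ w : G.Walk i j, w.length = k + 1) → ε ^ (k + 1) ≤ PprodFrom P s k i j := by
  intro k
  induction k with
  | zero =>
    rintro s i j ⟨w, hw⟩
    cases w with
    | nil => simp at hw
    | cons h p =>
      have hp0 : p.length = 0 := by
        simp only [SimpleGraph.Walk.length_cons] at hw; omega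
      have hbj := SimpleGraph.Walk.eq_of_length_eq_zero hp0
      subst hbj
      simpa [PprodFrom] using hedge _ _ _ h
  | succ k ih =>
    rintro s i j ⟨w, hw⟩
    cases w with
    | nil => simp at hw
    | cons h p =>
      rename_i b
      have hp : p.length = k + 1 := by
        simp only [SimpleGraph.Walk.length_cons] at hw; omega
      rw [PprodFrom, Matrix.mul_apply]
      have hterm : ε ^ (k + 2) ≤ P (s + k + 1) i b * PprodFrom P s k b j := by
        have hih := ih s b j ⟨p, hp⟩
        calc ε ^ (k + 2) = ε * ε ^ (k + 1) := by ring
          _ ≤ P (s + k + 1) i b * PprodFrom P s k b j :=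
            mul_le_mul (hedge _ _ _ h) hih (pow_nonneg hε.le _) (hnn _ _ _)
      exact hterm.trans (Finset.single_le_sum
        (f := fun l => P (s + k + 1) i l * PprodFrom P s k l j)
        (fun l _ => mul_nonneg (hnn _ _ _) (pprod_nonneg hnn k s l j)) (Finset.mem_univ b))

lemma bprod_split (t : ℕ) : ∀ k, bprod P (t + 1 + k) = PprodFrom P (t + 1) k * bprod P t := by
  intro k
  induction k with
  | zero => rfl
  | succ k ih =>
    show bprod P ((t + 1 + k) + 1) = PprodFrom P (t + 1) (k + 1) * bprod P t
    rw [bprod, ih, PprodFrom, mul_assoc]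

end StmtFiveAux

/-- every sequence in 𝒫_{G,ε} is ergodic. -/
theorem stmt_5 (N : ℕ) (hN : 2 ≤ N) (G : SimpleGraph (Fin N))
    (hconn : G.Connected) (hnb : ¬ G.Colorable 2) (ε : ℝ) (hε : 0 < ε)
    (P : ℕ → Matrix (Fin N) (Fin N) ℝ) (hP : ∀ t, P t ∈ Pset G ε) :
    Tendsto (fun t => projJ N * bprod P t) atTop (nhds 0) := by
  haveI : NeZero N := ⟨by omega⟩
  obtain ⟨m, hm1, hwalks⟩ := exists_uniform_walk hN hconn hnb
  have hPnn : ∀ t i j, 0 ≤ P t i j := fun t => (hP t).1.1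
  have hProw : ∀ t i, ∑ j, P t i j = 1 := fun t => (hP t).1.2
  have hPedge : ∀ t i j, G.Adj i j → ε ≤ P t i j := fun t i j h => ((hP t).2.1 i j h).1
  set δ := ε ^ m with hδdef
  have hδpos : 0 < δ := pow_pos hε m
  set c := 1 - (N : ℝ) * δ with hcdef
  have hQ : ∀ t i j, δ ≤ PprodFrom P t (m - 1) i j := by
    intro t i j
    obtain ⟨w, hw⟩ := hwalks i j
    have := pprod_entry_ge hε hPedge hPnn (m - 1) t i j ⟨w, by omega⟩
    rwa [show m - 1 + 1 = m from by omega] at this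
  have hQrow : ∀ t i, ∑ j, PprodFrom P t (m - 1) i j = 1 := fun t i =>
    pprod_rowsum hProw (m - 1) t i
  have hc0 : 0 ≤ c := by
    have i0 : Fin N := ⟨0, by omega⟩
    have h1 := hQrow 1 i0
    have h2 : (N : ℝ) * δ ≤ ∑ j, PprodFrom P 1 (m - 1) i0 j := by
      calc (N : ℝ) * δ = ∑ _j : Fin N, δ := by
            rw [Finset.sum_const, Finset.card_univ, Fintype.card_fin, nsmul_eq_mul]
        _ ≤ _ := Finset.sum_le_sum fun l _ => hQ 1 i0 l
    rw [hcdef]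
    linarith
  have hc1 : c < 1 := by
    have hNpos : (0:ℝ) < N := by exact_mod_cast (by omega : 0 < N)
    have := mul_pos hNpos hδpos
    rw [hcdef]
    linarith
  apply tendsto_pi_nhds.2
  intro i
  apply tendsto_pi_nhds.2
  intro j
  set y : ℕ → (Fin N → ℝ) := fun t k => bprod P t k j with hy
  have hstep : ∀ t, y (t + 1) = P (t + 1) *ᵥ y t := by
    intro t
    funext k
    simp [hy, bprod, Matrix.mul_apply, Matrix.mulVec, dotProduct]
  have hblock : ∀ t, y (t + m) = PprodFrom P (t + 1) (m - 1) *ᵥ y t := by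
    intro t
    have hb : bprod P (t + m) = PprodFrom P (t + 1) (m - 1) * bprod P t := by
      rw [show t + m = t + 1 + (m - 1) from by omega]
      exact bprod_split t (m - 1)
    funext k
    simp [hy, hb, Matrix.mul_apply, Matrix.mulVec, dotProduct]
  have hosc1 : ∀ t, osc (y (t + 1)) ≤ osc (y t) := by
    intro t
    have h := osc_mulVec_le (δ := 0) le_rfl (fun a b => hPnn (t + 1) a b)
      (hProw (t + 1)) (y t)
    rw [hstep t]
    simpa using h
  have hoscm : ∀ t, osc (y (t + m)) ≤ c * osc (y t) := by
    intro t
    rw [hblock t, hcdef]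
    exact osc_mulVec_le hδpos.le (hQ (t + 1)) (hQrow (t + 1)) (y t)
  have hmono : ∀ s t, s ≤ t → osc (y t) ≤ osc (y s) := by
    intro s t hst
    induction t, hst using Nat.le_induction with
    | base => exact le_rfl
    | succ t h ih => exact (hosc1 t).trans ih
  have hbound : ∀ k t, k * m ≤ t → osc (y t) ≤ c ^ k * osc (y 0) := by
    intro k
    induction k with
    | zero => intro t _; simpa using hmono 0 t (Nat.zero_le t)
    | succ k ih =>
      intro t ht
      have ht' : k * m + m ≤ t := by rw [Nat.succ_mul] at ht; exact ht
      have hkm : k * m ≤ t - m := by omega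
      have h2 : t = (t - m) + m := by omega
      calc osc (y t) = osc (y ((t - m) + m)) := by rw [← h2]
        _ ≤ c * osc (y (t - m)) := hoscm _
        _ ≤ c * (c ^ k * osc (y 0)) := mul_le_mul_of_nonneg_left (ih _ hkm) hc0
        _ = c ^ (k + 1) * osc (y 0) := by ring
  have hentry : ∀ t, |(projJ N * bprod P t) i j| ≤ osc (y t) := by
    intro t
    have hval : (projJ N * bprod P t) i j
        = bprod P t i j - (N : ℝ)⁻¹ * ∑ k, bprod P t k j := by
      simp [projJ, Matrix.sub_mul, Matrix.mul_apply, Matrix.smul_apply, Matrix.one_apply,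
        Finset.mul_sum, sub_mul, Finset.sum_sub_distrib, ite_mul, Finset.sum_ite_eq]
    rw [hval]
    exact abs_sub_avg_le_osc (y t) i
  have hC : Tendsto (fun t : ℕ => c ^ (t / m) * osc (y 0)) atTop (nhds 0) := by
    have h1 : Tendsto (fun t : ℕ => t / m) atTop atTop :=
      tendsto_atTop_atTop.2 fun b => ⟨b * m, fun t ht =>
        (Nat.le_div_iff_mul_le (by omega)).2 ht⟩
    have h2 := ((tendsto_pow_atTop_nhds_zero_of_lt_one hc0 hc1).comp h1).mul_const (osc (y 0))
    simpa using h2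
  have hsq : Tendsto (fun t => (projJ N * bprod P t) i j) atTop (nhds 0) := by
    apply squeeze_zero_norm _ hC
    intro t
    calc ‖(projJ N * bprod P t) i j‖ = |(projJ N * bprod P t) i j| := rfl
      _ ≤ osc (y t) := hentry t
      _ ≤ c ^ (t / m) * osc (y 0) := hbound (t / m) t (Nat.div_mul_le_self t m)
  exact hsq
end

section
/- Let G be connected and non-bipartite, ε > 0, and let {D^(t)P^(t)}_{t≥0} be a sequence with D^(t) ∈ 𝒟 and P^(t) ∈ 𝒫_{G,ε} for all t. Set δ_t := ‖D^(t) − I_N‖_∞ and Q_{0,k} := D^(k)P^(k)⋯D^(0)P^(0). Suppose c ∈ (0,1) and T ∈ ℕ satisfy the contraction property ‖Q̂_{t₀,t₁+T}‖_∞ ≤ (1 − c·δ_{t₁})·‖Q̂_{t₀,t₁}‖_∞ for all 0 ≤ t₀ ≤ t₁, where Q̂_{t₀,s} := P^(s)D^(s−1)P^(s−1)⋯D^(t₀)P^(t₀) for s > t₀ (with Q̂_{t₀,t₀} := P^(t₀)). If β := lim_{k→∞} ∏_{t=0}^{k}(1 − c·δ_t) = 0, then lim_{k→∞} Q_{0,k}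 = 0. -/
/-!
Let `a k = ‖Q̂_{0,k}‖_∞`. As `‖P‖_∞ ≤ 1` and `‖D‖_∞ ≤ 1`, the sequence `a` is antitone, so the
contraction property gives `a (k + T + 1) ≤ (1 - c δ_k) a k` (the shift `T + 1` also covers
`T = 0`). Multiplying over a window of `T + 1` consecutive indices telescopes:
`a (k + T + 1) ^ (T + 1) ≤ ∏_{j ≤ T} a (k + j) ≤ (∏_{t < k} (1 - c δ_t)) ∏_{j ≤ T} a j → 0`.
Hence the limit of `a` is `0`, and `‖Q_{0,k}‖_∞ = ‖D^(k) Q̂_{0,k}‖_∞ ≤ a k`.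
-/

open Matrix Filter

section Sequences

open Finset

variable {a r : ℕ → ℝ} {n : ℕ}

theorem prod_range_add_le_prod_mul (ha : ∀ k, 0 ≤ a k) (hr : ∀ k, 0 ≤ r k)
    (hstep : ∀ k, a (k + (n + 1)) ≤ r k * a k) (k : ℕ) :
    ∏ j ∈ range (n + 1), a (k + j) ≤ (∏ t ∈ range k, r t) * ∏ j ∈ range (n + 1), a j := by
  induction k with
  | zero => simp
  | succ k ih =>
    have hwindow : ∏ j ∈ range (n + 1), a (k + 1 + j) =
        (∏ j ∈ range n, a (k + 1 + j)) * a (k + (n + 1)) := by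
      rw [prod_range_succ, add_right_comm, add_assoc]
    have hwindow' : ∏ j ∈ range (n + 1), a (k + j) = (∏ j ∈ range n, a (k + 1 + j)) * a k := by
      rw [prod_range_succ', add_zero]
      simp only [add_right_comm k, add_assoc]
    have hinner : 0 ≤ ∏ j ∈ range n, a (k + 1 + j) := prod_nonneg fun _ _ => ha _
    calc ∏ j ∈ range (n + 1), a (k + 1 + j)
        ≤ (∏ j ∈ range n, a (k + 1 + j)) * (r k * a k) := by
          rw [hwindow]; exact mul_le_mul_of_nonneg_left (hstep k) hinner
      _ = r k * ∏ j ∈ range (n + 1), a (k + j) := by rw [hwindow']; ring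
      _ ≤ r k * ((∏ t ∈ range k, r t) * ∏ j ∈ range (n + 1), a j) :=
          mul_le_mul_of_nonneg_left ih (hr k)
      _ = (∏ t ∈ range (k + 1), r t) * ∏ j ∈ range (n + 1), a j := by
          rw [prod_range_succ _ k]; ring

theorem tendsto_zero_of_antitone_of_le_mul (ha : ∀ k, 0 ≤ a k) (hanti : Antitone a)
    (hr : ∀ k, 0 ≤ r k) (hstep : ∀ k, a (k + (n + 1)) ≤ r k * a k)
    (hprod : Tendsto (fun k => ∏ t ∈ range k, r t) atTop (nhds 0)) :
    Tendsto a atTop (nhds 0) := by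
  obtain ⟨L, hL⟩ : ∃ L, Tendsto a atTop (nhds L) :=
    ⟨_, tendsto_atTop_ciInf hanti ⟨0, Set.forall_mem_range.mpr ha⟩⟩
  have hpow_le : ∀ k, a (k + (n + 1)) ^ (n + 1) ≤
      (∏ t ∈ range k, r t) * ∏ j ∈ range (n + 1), a j := fun k =>
    calc a (k + (n + 1)) ^ (n + 1) = ∏ _j ∈ range (n + 1), a (k + (n + 1)) := by
          rw [prod_const, card_range]
      _ ≤ ∏ j ∈ range (n + 1), a (k + j) :=
          prod_le_prod (fun _ _ => ha _) fun j hj => hanti (by simp at hj; omega)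
      _ ≤ _ := prod_range_add_le_prod_mul ha hr hstep k
  have hpow_zero : Tendsto (fun k => a (k + (n + 1)) ^ (n + 1)) atTop (nhds 0) := by
    refine squeeze_zero (fun k => pow_nonneg (ha _) _) hpow_le ?_
    simpa using hprod.mul_const (∏ j ∈ range (n + 1), a j)
  have hpow_L : Tendsto (fun k => a (k + (n + 1)) ^ (n + 1)) atTop (nhds (L ^ (n + 1))) :=
    (hL.comp (tendsto_add_atTop_nat _)).pow _
  rwa [pow_eq_zero_iff n.succ_ne_zero |>.mp (tendsto_nhds_unique hpow_L hpow_zero)] at hL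

end Sequences

section LinftyNorm

open Finset

attribute [local instance] Matrix.linftyOpNormedRing

variable {N : ℕ}

theorem infNorm_eq_norm (M : Matrix (Fin N) (Fin N) ℝ) : infNorm M = ‖M‖ := by
  rw [Matrix.linfty_opNorm_def, sup_univ_eq_ciSup, NNReal.coe_iSup, infNorm]
  push_cast
  simp [Real.norm_eq_abs]

theorem norm_le_one_of_rowStochastic {P : Matrix (Fin N) (Fin N) ℝ} (hP : rowStochastic P) :
    ‖P‖ ≤ 1 := by
  rw [← infNorm_eq_norm]
  refine Real.iSup_le (fun i => ?_) zero_le_one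
  simp_rw [abs_of_nonneg (hP.1 i _), hP.2 i, le_refl]

theorem norm_le_one_of_isDiag {M : Matrix (Fin N) (Fin N) ℝ} (hM : M.IsDiag)
    (h : ∀ i, |M i i| ≤ 1) : ‖M‖ ≤ 1 := by
  rw [← infNorm_eq_norm]
  refine Real.iSup_le (fun i => ?_) zero_le_one
  rw [sum_eq_single i (fun j _ hj => by rw [hM hj.symm, abs_zero]) (by simp)]
  exact h i

theorem norm_le_one_of_mem_Dset {D : Matrix (Fin N) (Fin N) ℝ} (hD : D ∈ Dset N) :
    ‖D‖ ≤ 1 :=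
  norm_le_one_of_isDiag hD.1 fun i => abs_le.mpr ⟨by linarith [(hD.2 i).1], (hD.2 i).2⟩

theorem norm_sub_one_le_one_of_mem_Dset {D : Matrix (Fin N) (Fin N) ℝ} (hD : D ∈ Dset N) :
    ‖D - 1‖ ≤ 1 :=
  norm_le_one_of_isDiag (hD.1.sub Matrix.isDiag_one) fun i => by
    rw [Matrix.sub_apply, Matrix.one_apply_eq]
    exact abs_le.mpr ⟨by linarith [(hD.2 i).1], by linarith [(hD.2 i).2]⟩

theorem Qprod_eq_mul_Qhat (D P : ℕ → Matrix (Fin N) (Fin N) ℝ) (k : ℕ) :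
    Qprod D P k = D k * Qhat D P 0 k := by
  induction k with
  | zero => rfl
  | succ k ih =>
    simp only [Qprod, Qhat, ih, zero_add, Matrix.mul_assoc]

theorem antitone_norm_Qhat {D P : ℕ → Matrix (Fin N) (Fin N) ℝ} (hD : ∀ t, ‖D t‖ ≤ 1)
    (hP : ∀ t, ‖P t‖ ≤ 1) (t₀ : ℕ) : Antitone fun k => ‖Qhat D P t₀ k‖ :=
  antitone_nat_of_succ_le fun k =>
    calc ‖P (t₀ + k + 1) * D (t₀ + k) * Qhat D P t₀ k‖
        ≤ ‖P (t₀ + k + 1)‖ * ‖D (t₀ + k)‖ * ‖Qhat D P t₀ k‖ := norm_mul₃_le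
      _ ≤ 1 * 1 * ‖Qhat D P t₀ k‖ := by gcongr <;> simp [hD, hP]
      _ = ‖Qhat D P t₀ k‖ := by ring

theorem tendsto_Qprod_zero {D P : ℕ → Matrix (Fin N) (Fin N) ℝ} {c : ℝ} {T : ℕ}
    (hD : ∀ t, D t ∈ Dset N) (hP : ∀ t, rowStochastic (P t)) (hc1 : c < 1)
    (hcontr : ∀ k, infNorm (Qhat D P 0 (k + T)) ≤
      (1 - c * infNorm (D k - 1)) * infNorm (Qhat D P 0 k))
    (hβ : Tendsto (fun k => ∏ t ∈ range (k + 1), (1 - c * infNorm (D t - 1))) atTop (nhds 0)) :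
    Tendsto (fun k => Qprod D P k) atTop (nhds 0) := by
  simp only [infNorm_eq_norm] at hcontr hβ
  have hDn : ∀ t, ‖D t‖ ≤ 1 := fun t => norm_le_one_of_mem_Dset (hD t)
  have hanti := antitone_norm_Qhat hDn (fun t => norm_le_one_of_rowStochastic (hP t)) 0
  have hfactor : ∀ t, 0 ≤ 1 - c * ‖D t - 1‖ := fun t => by
    nlinarith [norm_nonneg (D t - 1), norm_sub_one_le_one_of_mem_Dset (hD t)]
  have hstep : ∀ k, ‖Qhat D P 0 (k + (T + 1))‖ ≤ (1 - c * ‖D k - 1‖) * ‖Qhat D P 0 k‖ :=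
    fun k => (hanti (Nat.le_succ _)).trans (hcontr k)
  have hQhat := tendsto_zero_of_antitone_of_le_mul (fun k => norm_nonneg _) hanti hfactor hstep
    ((tendsto_add_atTop_iff_nat 1).mp hβ)
  refine tendsto_zero_iff_norm_tendsto_zero.mpr
    (squeeze_zero (fun k => norm_nonneg _) (fun k => ?_) hQhat)
  calc ‖Qprod D P k‖ = ‖D k * Qhat D P 0 k‖ := by rw [Qprod_eq_mul_Qhat]
    _ ≤ ‖D k‖ * ‖Qhat D P 0 k‖ := norm_mul_le _ _
    _ ≤ ‖Qhat D P 0 k‖ := mul_le_of_le_one_left (norm_nonneg _) (hDn k)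

end LinftyNorm

theorem stmt_7_general (N : ℕ) (G : SimpleGraph (Fin N)) (ε : ℝ)
    (D P : ℕ → Matrix (Fin N) (Fin N) ℝ)
    (hD : ∀ t, D t ∈ Dset N) (hP : ∀ t, P t ∈ Pset G ε)
    (c : ℝ) (hc1 : c < 1) (T : ℕ)
    (hcontr : ∀ t₀ t₁ : ℕ, t₀ ≤ t₁ →
      infNorm (Qhat D P t₀ (t₁ + T - t₀)) ≤
        (1 - c * infNorm (D t₁ - 1)) * infNorm (Qhat D P t₀ (t₁ - t₀)))
    (hβ : Tendsto (fun k => ∏ t ∈ Finset.range (k + 1), (1 - c * infNorm (D t - 1)))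
      atTop (nhds 0)) :
    Tendsto (fun k => Qprod D P k) atTop (nhds 0) :=
  tendsto_Qprod_zero hD (fun t => (hP t).1) hc1 (fun k => by simpa using hcontr 0 k k.zero_le) hβ

/-- if β = lim ∏(1 − cδ_t) = 0 (given the contraction property),
then Q_{0,k} → 0. -/
theorem stmt_7 (N : ℕ) (hN : 2 ≤ N) (G : SimpleGraph (Fin N))
    (hconn : G.Connected) (hnb : ¬ G.Colorable 2) (ε : ℝ) (hε : 0 < ε)
    (D P : ℕ → Matrix (Fin N) (Fin N) ℝ)
    (hD : ∀ t, D t ∈ Dset N) (hP : ∀ t, P t ∈ Pset G ε)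
    (c : ℝ) (hc0 : 0 < c) (hc1 : c < 1) (T : ℕ)
    (hcontr : ∀ t₀ t₁ : ℕ, t₀ ≤ t₁ →
      infNorm (Qhat D P t₀ (t₁ + T - t₀)) ≤
        (1 - c * infNorm (D t₁ - 1)) * infNorm (Qhat D P t₀ (t₁ - t₀)))
    (hβ : Tendsto (fun k => ∏ t ∈ Finset.range (k + 1), (1 - c * infNorm (D t - 1)))
      atTop (nhds 0)) :
    Tendsto (fun k => Qprod D P k) atTop (nhds 0) :=
  stmt_7_general N G ε D P hD hP c hc1 T hcontr hβ
end

section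
/- Let {D^(t)P^(t)}_{t≥0} be a sequence where each D^(t) ∈ 𝒟 and each P^(t) ∈ ℝ^{N×N} is row-stochastic (entrywise nonnegative with every row summing to 1). Set δ_t := ‖D^(t) − I_N‖_∞. Then for all 0 ≤ m ≤ M the entrywise inequalities hold: (∏_{t=m}^{M}(1 − δ_t))·P^(M)P^(M−1)⋯P^(m) ≤_ew D^(M)P^(M)D^(M−1)P^(M−1)⋯D^(m)P^(m) ≤_ew P^(M)P^(M−1)⋯P^(m). -/
/-!
Write c_t = 1 - δ_t. Since D^(t) - I is diagonal, its i-th absolute row sum is 1 - D^(t)_ii,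
so c_t ≤ D^(t)_ii ≤ 1 and c_t ≥ 0. Left multiplication by D^(t) therefore scales every row by a
factor in [c_t, 1], and left multiplication by the entrywise nonnegative P^(t) preserves
entrywise inequalities; both bounds follow by induction on the number of factors.
-/

open Matrix Filter

namespace Matrix

variable {l m n R : Type*} [Fintype m]

theorem IsDiag.mul_apply [NonUnitalNonAssocSemiring R] {D : Matrix m m R} (hD : D.IsDiag)
    (A : Matrix m n R) (i : m) (j : n) : (D * A) i j = D i i * A i j := by
  rw [Matrix.mul_apply]
  exact Finset.sum_eq_single i (fun k _ hk => by rw [hD hk.symm, zero_mul]) (by simp)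

variable [Semiring R] [PartialOrder R] [IsOrderedRing R]

theorem mul_apply_nonneg {A : Matrix l m R} {B : Matrix m n R} (hA : ∀ i j, 0 ≤ A i j)
    (hB : ∀ i j, 0 ≤ B i j) (i : l) (j : n) : 0 ≤ (A * B) i j :=
  Finset.sum_nonneg fun k _ => mul_nonneg (hA i k) (hB k j)

theorem mul_apply_le_mul_apply {A : Matrix l m R} {B C : Matrix m n R} (hA : ∀ i j, 0 ≤ A i j)
    (hBC : ∀ i j, B i j ≤ C i j) (i : l) (j : n) : (A * B) i j ≤ (A * C) i j :=
  Finset.sum_le_sum fun k _ => mul_le_mul_of_nonneg_left (hBC k j) (hA i k)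

end Matrix

section Dset

variable {N : ℕ} {D : Matrix (Fin N) (Fin N) ℝ}

theorem sum_abs_sub_one_apply_of_mem_Dset (hD : D ∈ Dset N) (i : Fin N) :
    ∑ j, |(D - 1) i j| = 1 - D i i := by
  rw [Finset.sum_eq_single i (fun j _ hj => by simp [hD.1 hj.symm, Matrix.one_apply_ne hj.symm])
    (by simp), Matrix.sub_apply, Matrix.one_apply_eq, abs_sub_comm]
  exact abs_of_nonneg (sub_nonneg.2 (hD.2 i).2)

theorem one_sub_infNorm_sub_one_le_apply (hD : D ∈ Dset N) (i : Fin N) :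
    1 - infNorm (D - 1) ≤ D i i := by
  have := le_ciSup (Set.finite_range fun i => ∑ j, |(D - 1) i j|).bddAbove i
  rw [sum_abs_sub_one_apply_of_mem_Dset hD] at this
  rw [infNorm]
  linarith

theorem one_sub_infNorm_sub_one_nonneg (hD : D ∈ Dset N) : 0 ≤ 1 - infNorm (D - 1) := by
  have : infNorm (D - 1) ≤ 1 := Real.iSup_le (fun i => by
    rw [sum_abs_sub_one_apply_of_mem_Dset hD]; linarith [(hD.2 i).1]) zero_le_one
  linarith

end Dset

section Products

variable {N : ℕ} {D P : ℕ → Matrix (Fin N) (Fin N) ℝ}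

theorem QprodFrom_succ_apply (hD : ∀ t, (D t).IsDiag) (m k : ℕ) (i j : Fin N) :
    QprodFrom D P m (k + 1) i j =
      D (m + k + 1) i i * (P (m + k + 1) * QprodFrom D P m k) i j := by
  rw [QprodFrom, Matrix.mul_assoc, (hD _).mul_apply]

theorem QprodFrom_nonneg (hD : ∀ t, (D t).IsDiag) (hD₀ : ∀ t i, 0 ≤ D t i i)
    (hP : ∀ t i j, 0 ≤ P t i j) (m k : ℕ) (i j : Fin N) : 0 ≤ QprodFrom D P m k i j := by
  induction k generalizing i j with
  | zero => rw [QprodFrom, (hD m).mul_apply]; exact mul_nonneg (hD₀ m i) (hP m i j)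
  | succ k ih =>
    rw [QprodFrom_succ_apply hD]
    exact mul_nonneg (hD₀ _ i) (Matrix.mul_apply_nonneg (hP _) ih i j)

theorem QprodFrom_le_PprodFrom (hD : ∀ t, D t ∈ Dset N) (hP : ∀ t i j, 0 ≤ P t i j)
    (m k : ℕ) (i j : Fin N) : QprodFrom D P m k i j ≤ PprodFrom P m k i j := by
  induction k generalizing i j with
  | zero =>
    rw [QprodFrom, (hD m).1.mul_apply, PprodFrom]
    exact mul_le_of_le_one_left (hP m i j) ((hD m).2 i).2
  | succ k ih =>
    rw [QprodFrom_succ_apply fun t => (hD t).1, PprodFrom]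
    have hQ := QprodFrom_nonneg (fun t => (hD t).1) (fun t i => ((hD t).2 i).1) hP m k
    calc D (m + k + 1) i i * (P (m + k + 1) * QprodFrom D P m k) i j
        ≤ (P (m + k + 1) * QprodFrom D P m k) i j :=
          mul_le_of_le_one_left (Matrix.mul_apply_nonneg (hP _) hQ i j) ((hD _).2 i).2
      _ ≤ (P (m + k + 1) * PprodFrom P m k) i j := Matrix.mul_apply_le_mul_apply (hP _) ih i j

theorem prod_mul_PprodFrom_le_QprodFrom {c : ℕ → ℝ} (hc : ∀ t, 0 ≤ c t)
    (hcD : ∀ t i, c t ≤ D t i i) (hD : ∀ t, (D t).IsDiag) (hP : ∀ t i j, 0 ≤ P t i j)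
    (m k : ℕ) (i j : Fin N) :
    (∏ t ∈ Finset.Icc m (m + k), c t) * PprodFrom P m k i j ≤ QprodFrom D P m k i j := by
  induction k generalizing i j with
  | zero =>
    rw [Nat.add_zero, Finset.Icc_self, Finset.prod_singleton, QprodFrom, (hD m).mul_apply]
    exact mul_le_mul_of_nonneg_right (hcD m i) (hP m i j)
  | succ k ih =>
    set C := ∏ t ∈ Finset.Icc m (m + k), c t
    have hQ := QprodFrom_nonneg hD (fun t i => (hc t).trans (hcD t i)) hP m k
    have hPQ : C * (P (m + k + 1) * PprodFrom P m k) i j ≤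
        (P (m + k + 1) * QprodFrom D P m k) i j := by
      rw [← smul_eq_mul, ← Matrix.smul_apply, ← Matrix.mul_smul]
      exact Matrix.mul_apply_le_mul_apply (hP _) ih i j
    rw [← add_assoc, Finset.prod_Icc_succ_top (by omega), QprodFrom_succ_apply hD, PprodFrom,
      mul_comm C, mul_assoc]
    calc c (m + k + 1) * (C * (P (m + k + 1) * PprodFrom P m k) i j)
        ≤ c (m + k + 1) * (P (m + k + 1) * QprodFrom D P m k) i j :=
          mul_le_mul_of_nonneg_left hPQ (hc _)
      _ ≤ D (m + k + 1) i i * (P (m + k + 1) * QprodFrom D P m k) i j :=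
          mul_le_mul_of_nonneg_right (hcD _ i) (Matrix.mul_apply_nonneg (hP _) hQ i j)

end Products

theorem stmt_9_general (N : ℕ)
    (D P : ℕ → Matrix (Fin N) (Fin N) ℝ)
    (hD : ∀ t, D t ∈ Dset N) (hP : ∀ t, rowStochastic (P t)) :
    ∀ m M : ℕ, m ≤ M → ∀ i j,
      (∏ t ∈ Finset.Icc m M, (1 - infNorm (D t - 1))) * PprodFrom P m (M - m) i j ≤
        QprodFrom D P m (M - m) i j ∧
      QprodFrom D P m (M - m) i j ≤ PprodFrom P m (M - m) i j := by
  intro m M hmM i j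
  obtain ⟨k, rfl⟩ := Nat.exists_eq_add_of_le hmM
  rw [Nat.add_sub_cancel_left]
  exact ⟨prod_mul_PprodFrom_le_QprodFrom (fun t => one_sub_infNorm_sub_one_nonneg (hD t))
      (fun t => one_sub_infNorm_sub_one_le_apply (hD t)) (fun t => (hD t).1) (fun t => (hP t).1)
      m k i j,
    QprodFrom_le_PprodFrom hD (fun t => (hP t).1) m k i j⟩

/-- entrywise sandwich inequality
(∏_{t=m}^{M}(1 − δ_t))·P^(M)⋯P^(m) ≤_ew D^(M)P^(M)⋯D^(m)P^(m) ≤_ew P^(M)⋯P^(m). -/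
theorem stmt_9 (N : ℕ) (hN : 1 ≤ N)
    (D P : ℕ → Matrix (Fin N) (Fin N) ℝ)
    (hD : ∀ t, D t ∈ Dset N) (hP : ∀ t, rowStochastic (P t)) :
    ∀ m M : ℕ, m ≤ M → ∀ i j,
      (∏ t ∈ Finset.Icc m M, (1 - infNorm (D t - 1))) * PprodFrom P m (M - m) i j ≤
        QprodFrom D P m (M - m) i j ∧
      QprodFrom D P m (M - m) i j ≤ PprodFrom P m (M - m) i j :=
  stmt_9_general N D P hD hP
end

section
/- Let G be connected and non-bipartite and let ε > 0. Then every sequence {M^(t)}_{t≥0} with M^(t) ∈ ℳ_{G,ε} for all t ≥ 0 is ergodic; that is, lim_{t→∞} J·M^(t)M^(t−1)⋯M^(0) = 0. -/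
open Matrix Filter

/-!
Fix a column `j` and let `x t` be the `j`-th column of `M t ⋯ M 0`. Writing `M = D P`, we get
`0 ≤ x (t + 1) ≤ P x t` with `P` row-stochastic and `P u k ≥ ε` on edges, so `max x t` is
nonincreasing and converges. If `x t` attains its minimum at `i`, the deficit `max x t - x t i`
spreads one edge per step, shrinking by at most a factor `ε`. A connected non-bipartite graph has
walks of one common length `K` between all pairs of vertices (wind around an odd closed walk to fix
the parity), so `ε ^ K (max x t - min x t) ≤ max x t - max x (t + K) → 0`. Finally
`|(J x t) i| ≤ max x t - min x t`.
-/

open Finset SimpleGraph Topology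
open scoped BigOperators

namespace SimpleGraph

variable {V : Type*} {G : SimpleGraph V}

lemma exists_walk_length_eq_two_mul {u v : V} (h : G.Adj u v) (s : ℕ) :
    ∃ w : G.Walk u u, w.length = 2 * s := by
  induction s with
  | zero => exact ⟨.nil, rfl⟩
  | succ s ih =>
    obtain ⟨w, hw⟩ := ih
    exact ⟨.cons h (.cons h.symm w), by simp only [Walk.length_cons, hw]; ring⟩

lemma Walk.exists_length_eq_of_odd_length {u : V} (c : G.Walk u u) (hc : Odd c.length) {r : ℕ}
    (hr : c.length ≤ r) : ∃ w : G.Walk u u, w.length = r := by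
  cases c with
  | nil => simp at hc
  | cons h p =>
    obtain ⟨s, rfl | rfl⟩ := Nat.even_or_odd' r
    · exact exists_walk_length_eq_two_mul h s
    · obtain ⟨w, hw⟩ := exists_walk_length_eq_two_mul h (s - (p.length + 1) / 2)
      refine ⟨(Walk.cons h p).append w, ?_⟩
      obtain ⟨a, ha⟩ := hc
      simp only [Walk.length_append, Walk.length_cons, hw] at ha hr ⊢
      omega

lemma Connected.exists_forall_walk_length_eq [Fintype V] (hconn : G.Connected)
    (hnb : ¬ G.Colorable 2) : ∃ K, ∀ i j : V, ∃ w : G.Walk i j, w.length = K := by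
  obtain ⟨v, c, hc⟩ : ∃ v, ∃ c : G.Walk v v, Odd c.length := by
    simpa [two_colorable_iff_forall_loop_even] using hnb
  set R := univ.sup fun i => G.dist i v
  have hR : ∀ i, G.dist i v ≤ R := fun i => le_sup (f := fun i => G.dist i v) (mem_univ i)
  refine ⟨2 * R + c.length, fun i j => ?_⟩
  obtain ⟨p, hp⟩ := hconn.exists_walk_length_eq_dist i v
  obtain ⟨q, hq⟩ := hconn.exists_walk_length_eq_dist v j
  have hq' : q.length ≤ R := hq ▸ G.dist_comm ▸ hR j
  obtain ⟨m, hm⟩ := c.exists_length_eq_of_odd_length hc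
    (r := 2 * R + c.length - p.length - q.length) (by have := hR i; omega)
  exact ⟨p.append (m.append q), by simp only [Walk.length_append]; have := hR i; omega⟩

end SimpleGraph

section Averaging

variable {ι : Type*} [Fintype ι]

lemma mul_sub_le_sub_mulVec {A : Matrix ι ι ℝ} (hA0 : ∀ i j, 0 ≤ A i j)
    (hA1 : ∀ i, ∑ j, A i j = 1) {v : ι → ℝ} {B : ℝ} (hv : ∀ j, v j ≤ B) (i j : ι) :
    A i j * (B - v j) ≤ B - (A *ᵥ v) i := by
  calc A i j * (B - v j) ≤ ∑ k, A i k * (B - v k) :=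
        single_le_sum (f := fun k => A i k * (B - v k))
          (fun k _ => mul_nonneg (hA0 i k) (sub_nonneg.2 (hv k))) (mem_univ j)
    _ = B - (A *ᵥ v) i := by
        simp only [mul_sub, sum_sub_distrib, ← sum_mul, hA1, one_mul, mulVec, dotProduct]

lemma mulVec_apply_le {A : Matrix ι ι ℝ} (hA0 : ∀ i j, 0 ≤ A i j)
    (hA1 : ∀ i, ∑ j, A i j = 1) {v : ι → ℝ} {B : ℝ} (hv : ∀ j, v j ≤ B) (i : ι) :
    (A *ᵥ v) i ≤ B :=
  sub_nonneg.1 <| (mul_nonneg (hA0 i i) (sub_nonneg.2 (hv i))).trans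
    (mul_sub_le_sub_mulVec hA0 hA1 hv i i)

lemma abs_sub_expect_le_ciSup_sub_ciInf [Nonempty ι] (v : ι → ℝ) (i : ι) :
    |v i - 𝔼 k, v k| ≤ (⨆ k, v k) - ⨅ k, v k := by
  have hle : ∀ k, v k ≤ ⨆ k, v k := le_ciSup (Finite.bddAbove_range v)
  have hge : ∀ k, ⨅ k, v k ≤ v k := ciInf_le (Finite.bddBelow_range v)
  have h1 : 𝔼 k, v k ≤ ⨆ k, v k := expect_le univ_nonempty fun k _ => hle k
  have h2 : ⨅ k, v k ≤ 𝔼 k, v k := le_expect univ_nonempty fun k _ => hge k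
  rw [abs_le]
  constructor <;> linarith [hle i, hge i]

end Averaging

section Consensus

variable {ι : Type*} [Fintype ι] {G : SimpleGraph ι} {ε : ℝ} {P : ℕ → Matrix ι ι ℝ}
  {x : ℕ → ι → ℝ}

lemma pow_length_mul_sub_le_sub (hε : 0 ≤ ε) (hP0 : ∀ t i j, 0 ≤ P t i j)
    (hP1 : ∀ t i, ∑ j, P t i j = 1) (hPG : ∀ t i j, G.Adj i j → ε ≤ P t i j)
    (hx : ∀ t, x (t + 1) ≤ P t *ᵥ x t) {B : ℝ} {t : ℕ} (hB : ∀ s ≥ t, ∀ k, x s k ≤ B)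
    {i j : ι} (w : G.Walk i j) : ε ^ w.length * (B - x t i) ≤ B - x (t + w.length) j := by
  induction w generalizing t with
  | nil => simp
  | @cons i u j h p ih =>
    have hstep : ε * (B - x t i) ≤ B - x (t + 1) u :=
      calc ε * (B - x t i) ≤ P t u i * (B - x t i) :=
            mul_le_mul_of_nonneg_right (hPG t u i h.symm) (sub_nonneg.2 (hB t le_rfl i))
        _ ≤ B - (P t *ᵥ x t) u := mul_sub_le_sub_mulVec (hP0 t) (hP1 t) (hB t le_rfl) u i
        _ ≤ B - x (t + 1) u := sub_le_sub_left (hx t u) B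
    calc ε ^ (p.cons h).length * (B - x t i) = ε ^ p.length * (ε * (B - x t i)) := by
          rw [Walk.length_cons, pow_succ, mul_assoc]
      _ ≤ ε ^ p.length * (B - x (t + 1) u) := mul_le_mul_of_nonneg_left hstep (pow_nonneg hε _)
      _ ≤ B - x (t + 1 + p.length) j := ih fun s hs => hB s (by omega)
      _ = B - x (t + (p.cons h).length) j := by
          rw [Walk.length_cons, add_comm p.length, add_assoc]

lemma ciSup_succ_le_of_le_mulVec (hP0 : ∀ t i j, 0 ≤ P t i j)
    (hP1 : ∀ t i, ∑ j, P t i j = 1) (hx : ∀ t, x (t + 1) ≤ P t *ᵥ x t) (t : ℕ) :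
    ⨆ k, x (t + 1) k ≤ ⨆ k, x t k := by
  cases isEmpty_or_nonempty ι
  · simp
  exact ciSup_le fun i => (hx t i).trans <|
    mulVec_apply_le (hP0 t) (hP1 t) (le_ciSup (Finite.bddAbove_range _)) i

theorem tendsto_ciSup_sub_ciInf_of_le_mulVec [Nonempty ι] (hε : 0 < ε)
    (hP0 : ∀ t i j, 0 ≤ P t i j) (hP1 : ∀ t i, ∑ j, P t i j = 1)
    (hPG : ∀ t i j, G.Adj i j → ε ≤ P t i j) {K : ℕ}
    (hK : ∀ i j : ι, ∃ w : G.Walk i j, w.length = K) (hx : ∀ t, x (t + 1) ≤ P t *ᵥ x t)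
    (hx0 : ∀ t, 0 ≤ x t) :
    Tendsto (fun t => (⨆ k, x t k) - ⨅ k, x t k) atTop (𝓝 0) := by
  set b := fun t => ⨆ k, x t k
  have hb : Antitone b := antitone_nat_of_succ_le (ciSup_succ_le_of_le_mulVec hP0 hP1 hx)
  have hxb : ∀ t, ∀ s ≥ t, ∀ k, x s k ≤ b t := fun t s hs k =>
    (le_ciSup (Finite.bddAbove_range _) k).trans (hb hs)
  have hgap : ∀ t, ε ^ K * (b t - ⨅ k, x t k) ≤ b t - b (t + K) := by
    intro t
    obtain ⟨i, hi⟩ := exists_eq_ciInf_of_finite (f := x t)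
    have : b (t + K) ≤ b t - ε ^ K * (b t - x t i) := ciSup_le fun j => by
      obtain ⟨w, rfl⟩ := hK i j
      linarith [pow_length_mul_sub_le_sub hε.le hP0 hP1 hPG hx (hxb t) w]
    rw [← hi]
    linarith
  obtain ⟨L, hL⟩ : ∃ L, Tendsto b atTop (𝓝 L) := by
    refine ⟨_, tendsto_atTop_ciInf hb ⟨0, ?_⟩⟩
    rintro _ ⟨t, rfl⟩
    exact (hx0 t (Classical.arbitrary ι)).trans (hxb t t le_rfl _)
  have hdrop : Tendsto (fun t => (b t - b (t + K)) / ε ^ K) atTop (𝓝 0) := by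
    simpa using (hL.sub (hL.comp (tendsto_add_atTop_nat K))).div_const (ε ^ K)
  refine squeeze_zero (fun t => ?_) (fun t => ?_) hdrop
  · exact sub_nonneg.2 (ciInf_le_ciSup (Finite.bddBelow_range _) (Finite.bddAbove_range _))
  · rw [le_div_iff₀ (pow_pos hε K), mul_comm]
    exact hgap t

end Consensus

lemma projJ_mul_apply {N : ℕ} (A : Matrix (Fin N) (Fin N) ℝ) (i j : Fin N) :
    (projJ N * A) i j = A i j - 𝔼 k, A k j := by
  rw [Fintype.expect_eq_sum_div_card, Fintype.card_fin]
  simp [projJ, sub_mul, mul_apply, one_apply, mul_sum, div_eq_inv_mul]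

lemma exists_mem_Pset_mulVec_le_of_mem_Mset {N : ℕ} {G : SimpleGraph (Fin N)} {ε : ℝ}
    {M : Matrix (Fin N) (Fin N) ℝ} (hM : M ∈ Mset G ε) :
    ∃ P ∈ Pset G ε, ∀ v : Fin N → ℝ, 0 ≤ v → 0 ≤ M *ᵥ v ∧ M *ᵥ v ≤ P *ᵥ v := by
  obtain ⟨D, ⟨hDdiag, hD⟩, P, hP, rfl⟩ := hM
  refine ⟨P, hP, fun v hv => ?_⟩
  have hPv : 0 ≤ P *ᵥ v := fun i => dotProduct_nonneg_of_nonneg (hP.1.1 i) hv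
  rw [← mulVec_mulVec, ← (isDiag_iff_diagonal_diag D).1 hDdiag]
  refine ⟨fun i => ?_, fun i => ?_⟩ <;> rw [mulVec_diagonal]
  · exact mul_nonneg (hD i).1 (hPv i)
  · exact mul_le_of_le_one_left (hPv i) (hD i).2

theorem stmt_10_general (N : ℕ) (G : SimpleGraph (Fin N))
    (hconn : G.Connected) (hnb : ¬ G.Colorable 2) (ε : ℝ) (hε : 0 < ε)
    (M : ℕ → Matrix (Fin N) (Fin N) ℝ) (hM : ∀ t, M t ∈ Mset G ε) :
    Tendsto (fun t => projJ N * bprod M t) atTop (nhds 0) := by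
  choose P hP hMP using fun t => exists_mem_Pset_mulVec_le_of_mem_Mset (hM t)
  have := hconn.nonempty
  obtain ⟨K, hK⟩ := hconn.exists_forall_walk_length_eq hnb
  refine tendsto_pi_nhds.2 fun i => tendsto_pi_nhds.2 fun j => ?_
  set x : ℕ → Fin N → ℝ := fun t => bprod M t *ᵥ Pi.single j 1
  have hx_succ : ∀ t, x (t + 1) = M (t + 1) *ᵥ x t := fun t => by
    simp only [x, bprod, mulVec_mulVec]
  have hx0 : ∀ t, 0 ≤ x t := by
    intro t
    induction t with
    | zero => exact (hMP 0 _ (Pi.single_nonneg.2 zero_le_one)).1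
    | succ t ih => exact hx_succ t ▸ (hMP (t + 1) _ ih).1
  have hspread := tendsto_ciSup_sub_ciInf_of_le_mulVec hε (fun t => (hP (t + 1)).1.1)
    (fun t => (hP (t + 1)).1.2) (fun t i j h => ((hP (t + 1)).2.1 i j h).1) hK
    (fun t => hx_succ t ▸ (hMP (t + 1) _ (hx0 t)).2) hx0
  refine squeeze_zero_norm (fun t => ?_) hspread
  simpa [projJ_mul_apply, x, mulVec_single_one] using abs_sub_expect_le_ciSup_sub_ciInf (x t) i

/-- every sequence in ℳ_{G,ε} is ergodic. -/
theorem stmt_10 (N : ℕ) (hN : 2 ≤ N) (G : SimpleGraph (Fin N))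
    (hconn : G.Connected) (hnb : ¬ G.Colorable 2) (ε : ℝ) (hε : 0 < ε)
    (M : ℕ → Matrix (Fin N) (Fin N) ℝ) (hM : ∀ t, M t ∈ Mset G ε) :
    Tendsto (fun t => projJ N * bprod M t) atTop (nhds 0) :=
  stmt_10_general N G hconn hnb ε hε M hM
end
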